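/- For every y = (y₁,y₂,y₃) ∈ 𝒰, the potential function S is twice complex differentiable at y and its holomorphic Hessian, the matrix of second partial derivatives (∂²S/∂y_j∂y_k)_{j,k∈{1,2,3}}(y), equals 2iQ + i·diag(-1/(1+e^{-y₁}), 1/(1+e^{-y₂}), -3/(1+e^{-y₃})). -/

import Mathlib

/-!
Differentiating under the integral sign gives `Li₂'(z) = -Log(1 - z)/z` whenever `1 - z` lies in
the slit plane and `z ≠ 0`. The `w`-derivative `-(1 - w t)⁻¹` of the integrand is bounded
uniformly for `w` in a compact neighbourhood of `z` and `t ∈ [0, 1]`, because the slit plane is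
star-shaped about `1`, so `1 - w t` never meets the cut. The representation
`Log(1 - z) = -z ∫₀¹ (1 - z t)⁻¹ dt` both evaluates the derivative and shows that `Log(1 - z t)/t`
is bounded, hence integrable. Consequently `d/dy Li₂(-e^y) = -Log(1 + e^y)`, with derivative
`1/(1 + e^{-y})`, as long as `1 + e^y` avoids the cut, which it does on `𝒰`. The first partials
of `S` are thus explicit and affine in the other variables, and one more differentiation gives
the Hessian.
-/

open Real

/-- The dilogarithm `Li₂(z) = -∫₀¹ Log(1 - z t)/t dt`. -/
noncomputable def Li2 (z : ℂ) : ℂ :=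
  -∫ t in (0:ℝ)..1, Complex.log (1 - z * (t : ℂ)) / (t : ℂ)

/-- The potential function `S`. -/
noncomputable def pot (y₁ y₂ y₃ : ℂ) : ℂ :=
  Complex.I * (y₁ ^ 2 - y₁ * y₂ + y₂ * y₃ + y₃ ^ 2 / 2) +
    (-(π : ℂ) * y₁ + (π : ℂ) * y₃) +
    Complex.I * Li2 (-Complex.exp y₁) - Complex.I * Li2 (-Complex.exp y₂) +
    3 * Complex.I * Li2 (-Complex.exp y₃)

section Dilogarithm

open Complex Set Filter Metric MeasureTheory intervalIntegral
open scoped Interval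

lemma one_sub_mul_mem_slitPlane {z : ℂ} (hz : 1 - z ∈ slitPlane) {t : ℝ} (ht : t ∈ Icc 0 1) :
    1 - z * t ∈ slitPlane := by
  simpa [sub_eq_add_neg, mul_comm] using
    starConvex_one_slitPlane.add_smul_mem (y := -z) (by simpa [sub_eq_add_neg] using hz) ht.1 ht.2

lemma log_one_sub_eq_integral {z : ℂ} (hz : 1 - z ∈ slitPlane) :
    log (1 - z) = -z * ∫ t in (0:ℝ)..1, (1 - z * t)⁻¹ := by
  simpa [sub_eq_add_neg, mul_comm] using
    log_eq_integral (z := -z) (by simpa [sub_eq_add_neg] using hz)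

lemma exists_norm_inv_one_sub_mul_le {K : Set ℂ} (hK : IsCompact K)
    (hKs : ∀ w ∈ K, 1 - w ∈ slitPlane) :
    ∃ M, ∀ w ∈ K, ∀ t ∈ Icc (0:ℝ) 1, ‖(1 - w * t)⁻¹‖ ≤ M := by
  have hcont : ContinuousOn (fun p : ℂ × ℝ => (1 - p.1 * p.2)⁻¹) (K ×ˢ Icc 0 1) :=
    ContinuousOn.inv₀ (by fun_prop) fun p hp =>
      slitPlane_ne_zero (one_sub_mul_mem_slitPlane (hKs _ hp.1) hp.2)
  obtain ⟨M, hM⟩ := (hK.prod isCompact_Icc).exists_bound_of_continuousOn hcont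
  exact ⟨M, fun w hw t ht => hM (w, t) ⟨hw, ht⟩⟩

lemma norm_log_one_sub_mul_le {z : ℂ} {M : ℝ} (hz : 1 - z ∈ slitPlane)
    (hM : ∀ s ∈ Icc (0:ℝ) 1, ‖(1 - z * s)⁻¹‖ ≤ M) {t : ℝ} (ht : t ∈ Icc 0 1) :
    ‖log (1 - z * t)‖ ≤ M * ‖z‖ * t := by
  rw [log_one_sub_eq_integral (one_sub_mul_mem_slitPlane hz ht), norm_mul, norm_neg, norm_mul,
    norm_real, Real.norm_of_nonneg ht.1]
  have hint : ‖∫ s in (0:ℝ)..1, (1 - z * t * s)⁻¹‖ ≤ M * |1 - 0| :=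
    norm_integral_le_of_norm_le_const fun s hs => by
      rw [uIoc_of_le zero_le_one] at hs
      simpa [mul_assoc] using hM (t * s) ⟨mul_nonneg ht.1 hs.1.le, mul_le_one₀ ht.2 hs.1.le hs.2⟩
  rw [sub_zero, abs_one, mul_one] at hint
  exact (mul_le_mul_of_nonneg_left hint (mul_nonneg (norm_nonneg z) ht.1)).trans_eq (by ring)

lemma hasDerivAt_log_one_sub_mul_div {w t : ℂ} (ht : t ≠ 0) (h : 1 - w * t ∈ slitPlane) :
    HasDerivAt (fun w => log (1 - w * t) / t) (-(1 - w * t)⁻¹) w := by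
  refine ((((hasDerivAt_mul_const t).const_sub 1).clog h).div_const t).congr_deriv ?_
  have := slitPlane_ne_zero h
  field_simp

lemma intervalIntegrable_log_one_sub_mul_div {z : ℂ} (hz : 1 - z ∈ slitPlane) :
    IntervalIntegrable (fun t : ℝ => log (1 - z * t) / t) volume 0 1 := by
  obtain ⟨M, hM⟩ := exists_norm_inv_one_sub_mul_le isCompact_singleton (by simpa using hz)
  refine (intervalIntegrable_const (c := M * ‖z‖)).mono_fun'
    (by fun_prop : Measurable fun t : ℝ => log (1 - z * t) / t).aestronglyMeasurable ?_
  rw [EventuallyLE, ae_restrict_iff' measurableSet_uIoc]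
  refine Eventually.of_forall fun t ht => ?_
  rw [uIoc_of_le zero_le_one] at ht
  rw [norm_div, norm_real, Real.norm_of_nonneg ht.1.le, div_le_iff₀ ht.1]
  exact norm_log_one_sub_mul_le hz (hM z rfl) (Ioc_subset_Icc_self ht)

theorem hasDerivAt_Li2 {z : ℂ} (hz : 1 - z ∈ slitPlane) (hz0 : z ≠ 0) :
    HasDerivAt Li2 (-log (1 - z) / z) z := by
  obtain ⟨ε, hε, hball⟩ : ∃ ε > 0, closedBall z ε ⊆ {w | 1 - w ∈ slitPlane} :=
    nhds_basis_closedBall.mem_iff.1 ((isOpen_slitPlane.preimage (by fun_prop)).mem_nhds hz)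
  obtain ⟨M, hM⟩ := exists_norm_inv_one_sub_mul_le (isCompact_closedBall z ε) hball
  have hdiff : ∀ t ∈ Ι (0:ℝ) 1, ∀ w ∈ ball z ε,
      HasDerivAt (fun w : ℂ => log (1 - w * t) / t) (-(1 - w * t)⁻¹) w := by
    intro t ht w hw
    rw [uIoc_of_le zero_le_one] at ht
    exact hasDerivAt_log_one_sub_mul_div (ofReal_ne_zero.2 ht.1.ne')
      (one_sub_mul_mem_slitPlane (hball (ball_subset_closedBall hw)) (Ioc_subset_Icc_self ht))
  have hbound : ∀ t ∈ Ι (0:ℝ) 1, ∀ w ∈ ball z ε, ‖-(1 - w * t)⁻¹‖ ≤ M := by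
    intro t ht w hw
    rw [uIoc_of_le zero_le_one] at ht
    simpa using hM w (ball_subset_closedBall hw) t (Ioc_subset_Icc_self ht)
  obtain ⟨-, h⟩ := hasDerivAt_integral_of_dominated_loc_of_deriv_le (ball_mem_nhds z hε)
    (.of_forall fun w =>
      (by fun_prop : Measurable fun t : ℝ => log (1 - w * t) / t).aestronglyMeasurable)
    (intervalIntegrable_log_one_sub_mul_div hz)
    (by fun_prop : Measurable fun t : ℝ => -(1 - z * t)⁻¹).aestronglyMeasurable
    (.of_forall hbound) intervalIntegrable_const (.of_forall hdiff)
  refine h.neg.congr_deriv ?_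
  rw [intervalIntegral.integral_neg, neg_neg, log_one_sub_eq_integral hz]
  field_simp

end Dilogarithm

section SecondDerivative

open Filter Topology

variable {𝕜 E : Type*} [NontriviallyNormedField 𝕜] [NormedAddCommGroup E] [NormedSpace 𝕜 E]

theorem hasDerivAt_deriv_of_eventually_hasDerivAt {f g : 𝕜 → E} {x : 𝕜} {g' : E}
    (hf : ∀ᶠ y in 𝓝 x, HasDerivAt f (g y) y) (hg : HasDerivAt g g' x) :
    HasDerivAt (deriv f) g' x :=
  hg.congr_of_eventuallyEq (hf.mono fun _ hy => hy.deriv)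

theorem hasDerivAt_deriv_of_forall_hasDerivAt {F : 𝕜 → 𝕜 → E} {g : 𝕜 → E} {x y : 𝕜} {g' : E}
    (hF : ∀ w, HasDerivAt (F w) (g w) x) (hg : HasDerivAt g g' y) :
    HasDerivAt (fun w => deriv (F w) x) g' y := by
  simpa only [(hF _).deriv] using hg

end SecondDerivative

section Potential

open Complex Set Topology

variable {y : ℂ}

lemma one_add_exp_mem_slitPlane (hy : y.im ∈ Ioo (-π) π) : 1 + cexp y ∈ slitPlane := by
  rw [mem_slitPlane_iff, add_re, add_im, one_re, one_im, zero_add, exp_re, exp_im]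
  by_cases hs : Real.sin y.im = 0
  · rw [(Real.sin_eq_zero_iff_of_lt_of_lt hy.1 hy.2).1 hs, Real.cos_zero]
    exact Or.inl (by positivity)
  · exact Or.inr (mul_ne_zero (Real.exp_pos _).ne' hs)

lemma eventually_one_add_exp_mem_slitPlane (h : 1 + cexp y ∈ slitPlane) :
    ∀ᶠ w in 𝓝 y, 1 + cexp w ∈ slitPlane :=
  (by fun_prop : Continuous fun w : ℂ => 1 + cexp w).continuousAt.eventually_mem
    (isOpen_slitPlane.mem_nhds h)

lemma hasDerivAt_Li2_neg_exp (h : 1 + cexp y ∈ slitPlane) :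
    HasDerivAt (fun z : ℂ => Li2 (-cexp z)) (-log (1 + cexp y)) y := by
  have hne : -cexp y ≠ 0 := neg_ne_zero.2 (exp_ne_zero y)
  refine ((hasDerivAt_Li2 (by simpa using h) hne).comp y (hasDerivAt_exp y).neg).congr_deriv ?_
  rw [div_mul_cancel₀ _ hne, sub_neg_eq_add]

lemma hasDerivAt_log_one_add_exp (h : 1 + cexp y ∈ slitPlane) :
    HasDerivAt (fun z : ℂ => log (1 + cexp z)) (1 + cexp (-y))⁻¹ y := by
  refine (((hasDerivAt_exp y).const_add 1).clog h).congr_deriv ?_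
  rw [Complex.exp_neg, inv_eq_one_div (cexp y), one_add_div (exp_ne_zero y), inv_div, add_comm]

variable (y₁ y₂ y₃ : ℂ)

lemma hasDerivAt_pot₁ (h : 1 + cexp y₁ ∈ slitPlane) :
    HasDerivAt (fun z => pot z y₂ y₃) (I * (2 * y₁ - y₂) - π - I * log (1 + cexp y₁)) y₁ := by
  have hq : HasDerivAt (fun z : ℂ => z ^ 2 - z * y₂ + y₂ * y₃ + y₃ ^ 2 / 2) (2 * y₁ - y₂) y₁ := by
    simpa using (((hasDerivAt_pow 2 y₁).sub (hasDerivAt_mul_const y₂)).add_const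
      (y₂ * y₃)).add_const (y₃ ^ 2 / 2)
  refine ((((hq.const_mul I).add (((hasDerivAt_id y₁).const_mul _).add_const _)).add
    ((hasDerivAt_Li2_neg_exp h).const_mul I)).sub_const _ |>.add_const _).congr_deriv ?_
  ring

lemma hasDerivAt_pot₂ (h : 1 + cexp y₂ ∈ slitPlane) :
    HasDerivAt (fun z => pot y₁ z y₃) (I * (y₃ - y₁) + I * log (1 + cexp y₂)) y₂ := by
  have hq : HasDerivAt (fun z : ℂ => y₁ ^ 2 - y₁ * z + z * y₃ + y₃ ^ 2 / 2) (y₃ - y₁) y₂ := by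
    refine ((((hasDerivAt_id y₂).const_mul y₁).const_sub (y₁ ^ 2)).add
      (hasDerivAt_mul_const y₃) |>.add_const (y₃ ^ 2 / 2)).congr_deriv ?_
    ring
  refine ((((hq.const_mul I).add_const _).add_const _).sub
    ((hasDerivAt_Li2_neg_exp h).const_mul I) |>.add_const _).congr_deriv ?_
  ring

lemma hasDerivAt_pot₃ (h : 1 + cexp y₃ ∈ slitPlane) :
    HasDerivAt (fun z => pot y₁ y₂ z) (I * (y₂ + y₃) + π - 3 * I * log (1 + cexp y₃)) y₃ := by
  have hq : HasDerivAt (fun z : ℂ => y₁ ^ 2 - y₁ * y₂ + y₂ * z + z ^ 2 / 2) (y₂ + y₃) y₃ := by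
    refine ((((hasDerivAt_id y₃).const_mul y₂).const_add (y₁ ^ 2 - y₁ * y₂)).add
      ((hasDerivAt_pow 2 y₃).div_const 2)).congr_deriv ?_
    simp
  refine ((((hq.const_mul I).add (((hasDerivAt_id y₃).const_mul _).const_add _)).add_const
    _ |>.sub_const _).add ((hasDerivAt_Li2_neg_exp h).const_mul (3 * I))).congr_deriv ?_
  ring

lemma hasDerivAt_deriv_pot₁ (h : 1 + cexp y₁ ∈ slitPlane) :
    HasDerivAt (deriv fun z => pot z y₂ y₃) (2 * I - I / (1 + cexp (-y₁))) y₁ ∧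
    HasDerivAt (fun w => deriv (fun z => pot z w y₃) y₁) (-I) y₂ ∧
    HasDerivAt (fun w => deriv (fun z => pot z y₂ w) y₁) 0 y₃ := by
  refine ⟨hasDerivAt_deriv_of_eventually_hasDerivAt ((eventually_one_add_exp_mem_slitPlane h).mono
      fun w hw => hasDerivAt_pot₁ w y₂ y₃ hw) ?_,
    hasDerivAt_deriv_of_forall_hasDerivAt (fun w => hasDerivAt_pot₁ y₁ w y₃ h) ?_,
    hasDerivAt_deriv_of_forall_hasDerivAt (fun w => hasDerivAt_pot₁ y₁ y₂ w h)
      (hasDerivAt_const _ _)⟩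
  · exact ((((((hasDerivAt_id y₁).const_mul 2).sub_const y₂).const_mul I).sub_const _).sub
      ((hasDerivAt_log_one_add_exp h).const_mul I)).congr_deriv (by ring)
  · exact (((((hasDerivAt_id y₂).const_sub _).const_mul I).sub_const _).sub_const _).congr_deriv
      (by ring)

lemma hasDerivAt_deriv_pot₂ (h : 1 + cexp y₂ ∈ slitPlane) :
    HasDerivAt (fun w => deriv (fun z => pot w z y₃) y₂) (-I) y₁ ∧
    HasDerivAt (deriv fun z => pot y₁ z y₃) (I / (1 + cexp (-y₂))) y₂ ∧
    HasDerivAt (fun w => deriv (fun z => pot y₁ z w) y₂) I y₃ := by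
  refine ⟨hasDerivAt_deriv_of_forall_hasDerivAt (fun w => hasDerivAt_pot₂ w y₂ y₃ h) ?_,
    hasDerivAt_deriv_of_eventually_hasDerivAt ((eventually_one_add_exp_mem_slitPlane h).mono
      fun w hw => hasDerivAt_pot₂ y₁ w y₃ hw) ?_,
    hasDerivAt_deriv_of_forall_hasDerivAt (fun w => hasDerivAt_pot₂ y₁ y₂ w h) ?_⟩
  · exact ((((hasDerivAt_id y₁).const_sub _).const_mul I).add_const _).congr_deriv (by ring)
  · exact (((hasDerivAt_log_one_add_exp h).const_mul I).const_add _).congr_deriv (by ring)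
  · exact ((((hasDerivAt_id y₃).sub_const _).const_mul I).add_const _).congr_deriv (by ring)

lemma hasDerivAt_deriv_pot₃ (h : 1 + cexp y₃ ∈ slitPlane) :
    HasDerivAt (fun w => deriv (fun z => pot w y₂ z) y₃) 0 y₁ ∧
    HasDerivAt (fun w => deriv (fun z => pot y₁ w z) y₃) I y₂ ∧
    HasDerivAt (deriv fun z => pot y₁ y₂ z) (I - 3 * I / (1 + cexp (-y₃))) y₃ := by
  refine ⟨hasDerivAt_deriv_of_forall_hasDerivAt (fun w => hasDerivAt_pot₃ w y₂ y₃ h)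
      (hasDerivAt_const _ _),
    hasDerivAt_deriv_of_forall_hasDerivAt (fun w => hasDerivAt_pot₃ y₁ w y₃ h) ?_,
    hasDerivAt_deriv_of_eventually_hasDerivAt ((eventually_one_add_exp_mem_slitPlane h).mono
      fun w hw => hasDerivAt_pot₃ y₁ y₂ w hw) ?_⟩
  · exact (((((hasDerivAt_id y₂).add_const _).const_mul I).add_const _).sub_const _).congr_deriv
      (by ring)
  · exact (((((hasDerivAt_id y₃).const_add _).const_mul I).add_const _).sub
      ((hasDerivAt_log_one_add_exp h).const_mul (3 * I))).congr_deriv (by ring)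

end Potential

/-- on `𝒰`, the potential `S` is twice complex differentiable and
its holomorphic Hessian `(∂²S/∂y_j∂y_k)` equals
`2iQ + i·diag(-1/(1+e^{-y₁}), 1/(1+e^{-y₂}), -3/(1+e^{-y₃}))`. -/
theorem pot_hessian (y₁ y₂ y₃ : ℂ)
    (h₁ : y₁.im ∈ Set.Ioo (-π) 0) (h₂ : y₂.im ∈ Set.Ioo 0 π)
    (h₃ : y₃.im ∈ Set.Ioo (-π) 0) :
    -- first-order differentiability in each variable
    (DifferentiableAt ℂ (fun z => pot z y₂ y₃) y₁ ∧
     DifferentiableAt ℂ (fun z => pot y₁ z y₃) y₂ ∧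
     DifferentiableAt ℂ (fun z => pot y₁ y₂ z) y₃) ∧
    -- (1,1) entry: 2i·Q₁₁ + i·(-1/(1+e^{-y₁})) = 2i - i/(1+e^{-y₁})
    HasDerivAt (fun w => deriv (fun z => pot z y₂ y₃) w)
      (2 * Complex.I - Complex.I / (1 + Complex.exp (-y₁))) y₁ ∧
    -- (1,2) entry: 2i·Q₁₂ = -i
    HasDerivAt (fun w => deriv (fun z => pot z w y₃) y₁) (-Complex.I) y₂ ∧
    -- (1,3) entry: 0
    HasDerivAt (fun w => deriv (fun z => pot z y₂ w) y₁) 0 y₃ ∧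
    -- (2,1) entry: -i
    HasDerivAt (fun w => deriv (fun z => pot w z y₃) y₂) (-Complex.I) y₁ ∧
    -- (2,2) entry: 2i·Q₂₂ + i/(1+e^{-y₂}) = i/(1+e^{-y₂})
    HasDerivAt (fun w => deriv (fun z => pot y₁ z y₃) w)
      (Complex.I / (1 + Complex.exp (-y₂))) y₂ ∧
    -- (2,3) entry: i
    HasDerivAt (fun w => deriv (fun z => pot y₁ z w) y₂) Complex.I y₃ ∧
    -- (3,1) entry: 0
    HasDerivAt (fun w => deriv (fun z => pot w y₂ z) y₃) 0 y₁ ∧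
    -- (3,2) entry: i
    HasDerivAt (fun w => deriv (fun z => pot y₁ w z) y₃) Complex.I y₂ ∧
    -- (3,3) entry: 2i·Q₃₃ - 3i/(1+e^{-y₃}) = i - 3i/(1+e^{-y₃})
    HasDerivAt (fun w => deriv (fun z => pot y₁ y₂ z) w)
      (Complex.I - 3 * Complex.I / (1 + Complex.exp (-y₃))) y₃ := by
  have s₁ := one_add_exp_mem_slitPlane ⟨h₁.1, h₁.2.trans pi_pos⟩
  have s₂ := one_add_exp_mem_slitPlane ⟨(neg_neg_of_pos pi_pos).trans h₂.1, h₂.2⟩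
  have s₃ := one_add_exp_mem_slitPlane ⟨h₃.1, h₃.2.trans pi_pos⟩
  obtain ⟨e₁₁, e₁₂, e₁₃⟩ := hasDerivAt_deriv_pot₁ y₁ y₂ y₃ s₁
  obtain ⟨e₂₁, e₂₂, e₂₃⟩ := hasDerivAt_deriv_pot₂ y₁ y₂ y₃ s₂
  obtain ⟨e₃₁, e₃₂, e₃₃⟩ := hasDerivAt_deriv_pot₃ y₁ y₂ y₃ s₃
  exact ⟨⟨(hasDerivAt_pot₁ _ _ _ s₁).differentiableAt,
      (hasDerivAt_pot₂ _ _ _ s₂).differentiableAt, (hasDerivAt_pot₃ _ _ _ s₃).differentiableAt⟩,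
    e₁₁, e₁₂, e₁₃, e₂₁, e₂₂, e₂₃, e₃₁, e₃₂, e₃₃⟩
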